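/- Let G = (V, E) be a finite graph with at least two vertices, ∅ ∉ V, W = V ∪ {∅}, and Q_G the matrix on W × W given by Q_G(∅,∅) = α(G), Q_G(∅,x) = Q_G(x,∅) = −1/2, Q_G(x,y) = 1/2 for (x,y) ∈ E, and 0 otherwise. The inequality ⟨Q_G, A⟩ ≥ 0 induces a facet of the Boolean-quadratic cone bqc(W) if and only if G is connected and α-critical. -/
import Mathlib

open Finset

set_option linter.unusedSectionVars false
set_option linter.unusedTactic false
set_option maxHeartbeats 1000000

/-- The independence number of a finite graph. -/
noncomputable def indepNum {V : Type*} (G : SimpleGraph V) : ℕ :=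
  sSup {n : ℕ | ∃ s : Finset V, (∀ x ∈ s, ∀ y ∈ s, ¬ G.Adj x y) ∧ s.card = n}

/-- The matrix `Q_G` on `W × W`, `W = V ∪ {∅}` (modelled as `Option V`, `none = ∅`). -/
noncomputable def Qmat {V : Type*} (G : SimpleGraph V) [DecidableRel G.Adj] :
    Matrix (Option V) (Option V) ℝ := fun a b =>
  match a, b with
  | none, none => (indepNum G : ℝ)
  | none, some _ => -(1 / 2)
  | some _, none => -(1 / 2)
  | some x, some y => if G.Adj x y then 1 / 2 else 0

/-- The dual cone of the Boolean-quadratic cone `bqc(W)`: symmetric matrices `Z` with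
`⟨Z, f ⊗ f*⟩ ≥ 0` for every Boolean `f : W → {0,1}`. -/
def InBqcDual {W : Type*} [Fintype W] (Z : Matrix W W ℝ) : Prop :=
  Z.IsSymm ∧ ∀ f : W → ℝ, (∀ w, f w = 0 ∨ f w = 1) →
    0 ≤ ∑ x : W, ∑ y : W, Z x y * (f x * f y)

/-- `⟨Z, A⟩ ≥ 0` induces a facet of `bqc(W)`, equivalently `Z` spans an extreme ray of
the dual cone: `Z` is a nonzero element of the dual cone and whenever `Z = Z₁ + Z₂`
with `Z₁, Z₂` in the dual cone, `Z₁` is a nonnegative multiple of `Z`. -/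
def InducesFacet {W : Type*} [Fintype W] (Z : Matrix W W ℝ) : Prop :=
  InBqcDual Z ∧ Z ≠ 0 ∧
    ∀ Z₁ Z₂ : Matrix W W ℝ, InBqcDual Z₁ → InBqcDual Z₂ → Z₁ + Z₂ = Z →
      ∃ c : ℝ, 0 ≤ c ∧ Z₁ = c • Z

section Rel
variable {V : Type*} [Fintype V] [DecidableEq V] {G : SimpleGraph V} [DecidableRel G.Adj]


noncomputable def relIndep (G : SimpleGraph V) (A : Finset V) : ℕ :=
  sSup {n : ℕ | ∃ s : Finset V, s ⊆ A ∧ (∀ x ∈ s, ∀ y ∈ s, ¬ G.Adj x y) ∧ s.card = n}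

lemma relIndep_bdd (A : Finset V) :
    BddAbove {n : ℕ | ∃ s : Finset V, s ⊆ A ∧ (∀ x ∈ s, ∀ y ∈ s, ¬ G.Adj x y) ∧ s.card = n} := by
  refine ⟨Fintype.card V, fun n hn => ?_⟩
  obtain ⟨s, -, -, rfl⟩ := hn
  exact s.card_le_univ.trans (le_of_eq (Finset.card_univ))

lemma le_relIndep {A s : Finset V} (hs : s ⊆ A) (h : ∀ x ∈ s, ∀ y ∈ s, ¬ G.Adj x y) :
    s.card ≤ relIndep G A :=
  le_csSup (relIndep_bdd A) ⟨s, hs, h, rfl⟩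

lemma relIndep_spec (A : Finset V) :
    ∃ s : Finset V, s ⊆ A ∧ (∀ x ∈ s, ∀ y ∈ s, ¬ G.Adj x y) ∧ s.card = relIndep G A := by
  have hne : {n : ℕ | ∃ s : Finset V, s ⊆ A ∧ (∀ x ∈ s, ∀ y ∈ s, ¬ G.Adj x y) ∧ s.card = n}.Nonempty :=
    ⟨0, ∅, by simp⟩
  exact Nat.sSup_mem hne (relIndep_bdd A)

lemma indepNum_eq_relIndep : indepNum G = relIndep G univ := by
  unfold indepNum relIndep
  congr 1
  ext n
  simp [Finset.subset_univ]

lemma le_indepNum {s : Finset V} (h : ∀ x ∈ s, ∀ y ∈ s, ¬ G.Adj x y) :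
    s.card ≤ indepNum G := by
  rw [indepNum_eq_relIndep]; exact le_relIndep (Finset.subset_univ s) h

/-- the boolean vector supported on `{∅?} ∪ s`. -/

lemma two_mul_card_le {A : Finset V} : ∀ (s : Finset V), s ⊆ A →
    2 * s.card ≤ 2 * relIndep G A + ∑ x ∈ s, ∑ y ∈ s, (if G.Adj x y then 1 else 0) := by
  intro s
  induction s using Finset.strongInduction with
  | _ s ih =>
    intro hsA
    by_cases hind : ∀ x ∈ s, ∀ y ∈ s, ¬ G.Adj x y
    · have := le_relIndep hsA hind
      omega
    · push_neg at hind
      obtain ⟨u, hu, v, hv, hadj⟩ := hind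
      have hne : v ≠ u := fun h => G.irrefl (h ▸ hadj)
      have hvs : v ∈ s.erase u := Finset.mem_erase.mpr ⟨hne, hv⟩
      have hsub : s.erase u ⊂ s := Finset.erase_ssubset hu
      have hrec := ih _ hsub (Finset.Subset.trans (Finset.erase_subset u s) hsA)
      have hcard : (s.erase u).card = s.card - 1 := Finset.card_erase_of_mem hu
      have hcpos : 1 ≤ s.card := Finset.card_pos.mpr ⟨u, hu⟩
      have hdec : ∑ x ∈ s, ∑ y ∈ s, (if G.Adj x y then 1 else 0)
          = (∑ y ∈ s.erase u, (if G.Adj u y then 1 else 0))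
            + (∑ x ∈ s.erase u, (if G.Adj x u then 1 else 0))
            + ∑ x ∈ s.erase u, ∑ y ∈ s.erase u, (if G.Adj x y then 1 else 0) := by
        rw [← Finset.add_sum_erase _ _ hu]
        rw [← Finset.add_sum_erase _ (fun y => if G.Adj u y then 1 else 0) hu]
        have h2 : ∀ x ∈ s.erase u, (∑ y ∈ s, (if G.Adj x y then 1 else 0))
            = (if G.Adj x u then 1 else 0) + ∑ y ∈ s.erase u, (if G.Adj x y then 1 else 0) :=
          fun x _ => (Finset.add_sum_erase _ _ hu).symm
        rw [Finset.sum_congr rfl h2, Finset.sum_add_distrib]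
        simp [G.irrefl]
        ring
      have h1 : 1 ≤ ∑ y ∈ s.erase u, (if G.Adj u y then 1 else 0) := by
        calc 1 = (if G.Adj u v then 1 else 0) := by simp [hadj]
        _ ≤ _ := Finset.single_le_sum (f := fun y => if G.Adj u y then 1 else 0)
              (fun i _ => by positivity) hvs
      have h2 : 1 ≤ ∑ x ∈ s.erase u, (if G.Adj x u then 1 else 0) := by
        calc 1 = (if G.Adj v u then 1 else 0) := by simp [hadj.symm]
        _ ≤ _ := Finset.single_le_sum (f := fun x => if G.Adj x u then 1 else 0)
              (fun i _ => by positivity) hvs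
      omega

/-- the relative `Q` matrix supported on `A`. -/

noncomputable def QmatA (G : SimpleGraph V) [DecidableRel G.Adj] (A : Finset V) :
    Matrix (Option V) (Option V) ℝ := fun a b =>
  match a, b with
  | none, none => (relIndep G A : ℝ)
  | none, some x => if x ∈ A then -(1 / 2) else 0
  | some x, none => if x ∈ A then -(1 / 2) else 0
  | some x, some y => if G.Adj x y ∧ x ∈ A ∧ y ∈ A then 1 / 2 else 0

lemma Qmat_eq_QmatA : Qmat G = QmatA G univ := by
  funext a b
  cases a <;> cases b <;> simp [Qmat, QmatA, indepNum_eq_relIndep]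

/-- expansion of the quadratic form over `Option V`. -/

lemma Bexpand (Z : Matrix (Option V) (Option V) ℝ) (f : Option V → ℝ) :
    ∑ x : Option V, ∑ y : Option V, Z x y * (f x * f y)
    = Z none none * (f none * f none)
      + (∑ v : V, Z none (some v) * (f none * f (some v))
      + (∑ u : V, Z (some u) none * (f (some u) * f none)
      + ∑ u : V, ∑ v : V, Z (some u) (some v) * (f (some u) * f (some v)))) := by
  simp only [Fintype.sum_option]
  rw [Finset.sum_add_distrib]
  ring

lemma QmatA_boolean (A : Finset V) (f : Option V → ℝ) (hf : ∀ w, f w = 0 ∨ f w = 1) :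
    ∑ x : Option V, ∑ y : Option V, QmatA G A x y * (f x * f y)
    = (relIndep G A : ℝ) * (f none * f none)
      - f none * (univ.filter (fun v => v ∈ A ∧ f (some v) = 1)).card
      + (1/2) * ∑ x ∈ univ.filter (fun v => v ∈ A ∧ f (some v) = 1),
          ∑ y ∈ univ.filter (fun v => v ∈ A ∧ f (some v) = 1),
            (if G.Adj x y then (1:ℝ) else 0) := by
  classical
  set S := univ.filter (fun v => v ∈ A ∧ f (some v) = 1) with hS
  have hmemS : ∀ v, v ∈ S ↔ (v ∈ A ∧ f (some v) = 1) := by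
    intro v; simp [hS]
  have hnotS : ∀ v, v ∉ S → v ∈ A → f (some v) = 0 := by
    intro v hv hvA
    rcases hf (some v) with h | h
    · exact h
    · exact absurd ((hmemS v).mpr ⟨hvA, h⟩) hv
  rw [Bexpand]
  have e1 : ∑ v : V, QmatA G A none (some v) * (f none * f (some v))
      = -(1/2) * (f none * S.card) := by
    rw [← Finset.sum_subset (Finset.subset_univ S) (f := fun v => QmatA G A none (some v) * (f none * f (some v)))]
    · rw [Finset.sum_congr rfl (g := fun v => -(1/2) * f none)]
      · rw [Finset.sum_const, nsmul_eq_mul]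
        ring
      · intro v hv
        obtain ⟨hvA, hfv⟩ := (hmemS v).mp hv
        simp [QmatA, hvA, hfv]
    · intro v _ hv
      by_cases hvA : v ∈ A
      · simp [hnotS v hv hvA]
      · simp [QmatA, hvA]
  have e2 : ∑ u : V, QmatA G A (some u) none * (f (some u) * f none)
      = -(1/2) * (f none * S.card) := by
    rw [← Finset.sum_subset (Finset.subset_univ S) (f := fun v => QmatA G A (some v) none * (f (some v) * f none))]
    · rw [Finset.sum_congr rfl (g := fun v => -(1/2) * f none)]
      · rw [Finset.sum_const, nsmul_eq_mul]
        ring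
      · intro v hv
        obtain ⟨hvA, hfv⟩ := (hmemS v).mp hv
        simp [QmatA, hvA, hfv]
    · intro v _ hv
      by_cases hvA : v ∈ A
      · simp [hnotS v hv hvA]
      · simp [QmatA, hvA]
  have e3 : ∑ u : V, ∑ v : V, QmatA G A (some u) (some v) * (f (some u) * f (some v))
      = (1/2) * ∑ x ∈ S, ∑ y ∈ S, (if G.Adj x y then (1:ℝ) else 0) := by
    rw [← Finset.sum_subset (Finset.subset_univ S)
        (f := fun u => ∑ v : V, QmatA G A (some u) (some v) * (f (some u) * f (some v)))]
    · rw [Finset.mul_sum]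
      refine Finset.sum_congr rfl fun u hu => ?_
      obtain ⟨huA, hfu⟩ := (hmemS u).mp hu
      rw [← Finset.sum_subset (Finset.subset_univ S)
          (f := fun v => QmatA G A (some u) (some v) * (f (some u) * f (some v)))]
      · rw [Finset.mul_sum]
        refine Finset.sum_congr rfl fun v hv => ?_
        obtain ⟨hvA, hfv⟩ := (hmemS v).mp hv
        simp only [QmatA, hfu, hfv, huA, hvA, and_true, mul_one]
        by_cases hadj : G.Adj u v <;> simp [hadj]
      · intro v _ hv
        by_cases hvA : v ∈ A
        · simp [hnotS v hv hvA]
        · simp [QmatA, hvA]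
    · intro u _ hu
      refine Finset.sum_eq_zero fun v _ => ?_
      by_cases huA : u ∈ A
      · simp [hnotS u hu huA]
      · simp [QmatA, huA]
  rw [e1, e2, e3]
  simp only [QmatA]
  ring

lemma QmatA_isSymm (A : Finset V) : (QmatA G A).IsSymm := by
  unfold Matrix.IsSymm
  funext a b
  rw [Matrix.transpose_apply]
  cases a <;> cases b <;> simp only [QmatA]
  exact if_congr ⟨fun ⟨h, h1, h2⟩ => ⟨h.symm, h2, h1⟩, fun ⟨h, h1, h2⟩ => ⟨h.symm, h2, h1⟩⟩ rfl rfl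

lemma QmatA_dual (A : Finset V) : InBqcDual (QmatA G A) := by
  refine ⟨QmatA_isSymm A, fun f hf => ?_⟩
  rw [QmatA_boolean A f hf]
  set S := univ.filter (fun v => v ∈ A ∧ f (some v) = 1) with hS
  have hSA : S ⊆ A := fun v hv => (Finset.mem_filter.mp hv).2.1
  have hcount := two_mul_card_le (G := G) S hSA
  have hcast : (↑(∑ x ∈ S, ∑ y ∈ S, (if G.Adj x y then 1 else 0)) : ℝ)
      = ∑ x ∈ S, ∑ y ∈ S, (if G.Adj x y then (1:ℝ) else 0) := by
    push_cast
    refine Finset.sum_congr rfl fun x _ => Finset.sum_congr rfl fun y _ => ?_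
    split <;> simp
  have hd0 : (0:ℝ) ≤ ∑ x ∈ S, ∑ y ∈ S, (if G.Adj x y then (1:ℝ) else 0) :=
    Finset.sum_nonneg fun x _ => Finset.sum_nonneg fun y _ => by positivity
  rcases hf none with h | h
  · rw [h]; ring_nf; positivity
  · rw [h]
    have : (2 * S.card : ℝ) ≤ 2 * relIndep G A + ∑ x ∈ S, ∑ y ∈ S, (if G.Adj x y then (1:ℝ) else 0) := by
      rw [← hcast]
      exact_mod_cast hcount
    linarith

lemma relIndep_add {A : Finset V} (hcross : ∀ x ∈ A, ∀ y, y ∉ A → ¬ G.Adj x y) :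
    relIndep G Finset.univ = relIndep G A + relIndep G Aᶜ := by
  apply le_antisymm
  · obtain ⟨s, -, hsind, hscard⟩ := relIndep_spec (G := G) Finset.univ
    rw [← hscard, ← Finset.card_inter_add_card_sdiff s A]
    gcongr
    · exact le_relIndep (Finset.inter_subset_right)
        (fun x hx y hy => hsind x (Finset.mem_of_mem_inter_left hx) y
          (Finset.mem_of_mem_inter_left hy))
    · exact le_relIndep (fun x hx => Finset.mem_compl.mpr (Finset.mem_sdiff.mp hx).2)
        (fun x hx y hy => hsind x (Finset.mem_sdiff.mp hx).1 y (Finset.mem_sdiff.mp hy).1)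
  · obtain ⟨s₁, hs₁A, hs₁ind, hs₁card⟩ := relIndep_spec (G := G) A
    obtain ⟨s₂, hs₂A, hs₂ind, hs₂card⟩ := relIndep_spec (G := G) Aᶜ
    have hdisj : Disjoint s₁ s₂ := Finset.disjoint_left.mpr
      (fun a ha1 ha2 => Finset.mem_compl.mp (hs₂A ha2) (hs₁A ha1))
    have hind : ∀ x ∈ s₁ ∪ s₂, ∀ y ∈ s₁ ∪ s₂, ¬ G.Adj x y := by
      intro x hx y hy hxy
      rcases Finset.mem_union.mp hx with hx1 | hx2 <;>
        rcases Finset.mem_union.mp hy with hy1 | hy2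
      · exact hs₁ind x hx1 y hy1 hxy
      · exact hcross x (hs₁A hx1) y (Finset.mem_compl.mp (hs₂A hy2)) hxy
      · exact hcross y (hs₁A hy1) x (Finset.mem_compl.mp (hs₂A hx2)) hxy.symm
      · exact hs₂ind x hx2 y hy2 hxy
    have := le_relIndep (Finset.subset_univ (s₁ ∪ s₂)) hind
    rw [Finset.card_union_of_disjoint hdisj, hs₁card, hs₂card] at this
    exact this

def fset (t : ℝ) (s : Finset V) : Option V → ℝ := fun w =>
  match w with
  | none => t
  | some x => if x ∈ s then 1 else 0

lemma fset_boolean {t : ℝ} (ht : t = 0 ∨ t = 1) (s : Finset V) :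
    ∀ w, fset t s w = 0 ∨ fset t s w = 1 := by
  intro w
  cases w with
  | none => exact ht
  | some x => by_cases hx : x ∈ s <;> simp [fset, hx]

lemma B_fset (Z : Matrix (Option V) (Option V) ℝ) (t : ℝ) (s : Finset V) :
    ∑ x : Option V, ∑ y : Option V, Z x y * (fset t s x * fset t s y)
    = Z none none * (t * t)
      + t * (∑ x ∈ s, (Z none (some x) + Z (some x) none))
      + ∑ x ∈ s, ∑ y ∈ s, Z (some x) (some y) := by
  rw [Bexpand]
  have e1 : ∑ v : V, Z none (some v) * (fset t s none * fset t s (some v))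
      = t * ∑ x ∈ s, Z none (some x) := by
    rw [← Finset.sum_subset (Finset.subset_univ s)
      (f := fun v => Z none (some v) * (fset t s none * fset t s (some v)))]
    · rw [Finset.mul_sum]
      exact Finset.sum_congr rfl fun v hv => by simp [fset, hv]; ring
    · intro v _ hv; simp [fset, hv]
  have e2 : ∑ u : V, Z (some u) none * (fset t s (some u) * fset t s none)
      = t * ∑ x ∈ s, Z (some x) none := by
    rw [← Finset.sum_subset (Finset.subset_univ s)
      (f := fun v => Z (some v) none * (fset t s (some v) * fset t s none))]
    · rw [Finset.mul_sum]
      exact Finset.sum_congr rfl fun v hv => by simp [fset, hv]; ring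
    · intro v _ hv; simp [fset, hv]
  have e3 : ∑ u : V, ∑ v : V, Z (some u) (some v) * (fset t s (some u) * fset t s (some v))
      = ∑ x ∈ s, ∑ y ∈ s, Z (some x) (some y) := by
    rw [← Finset.sum_subset (Finset.subset_univ s)
      (f := fun u => ∑ v : V, Z (some u) (some v) * (fset t s (some u) * fset t s (some v)))]
    · refine Finset.sum_congr rfl fun u hu => ?_
      rw [← Finset.sum_subset (Finset.subset_univ s)
        (f := fun v => Z (some u) (some v) * (fset t s (some u) * fset t s (some v)))]
      · exact Finset.sum_congr rfl fun v hv => by simp [fset, hu, hv]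
      · intro v _ hv; simp [fset, hv]
    · intro u _ hu
      exact Finset.sum_eq_zero fun v _ => by simp [fset, hu]
  rw [e1, e2, e3, Finset.sum_add_distrib]
  have hnone : fset t s none = t := rfl
  rw [hnone]
  ring

lemma Q_fset (t : ℝ) (s : Finset V) :
    ∑ x : Option V, ∑ y : Option V, Qmat G x y * (fset t s x * fset t s y)
    = (indepNum G : ℝ) * (t * t) - t * s.card
      + (1/2) * ∑ x ∈ s, ∑ y ∈ s, (if G.Adj x y then (1:ℝ) else 0) := by
  rw [B_fset]
  have e1 : ∑ x ∈ s, (Qmat G none (some x) + Qmat G (some x) none) = -s.card := by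
    rw [Finset.sum_congr rfl (g := fun x => (-1 : ℝ)) (fun x _ => by norm_num [Qmat])]
    simp
  have e2 : ∑ x ∈ s, ∑ y ∈ s, Qmat G (some x) (some y)
      = (1/2) * ∑ x ∈ s, ∑ y ∈ s, (if G.Adj x y then (1:ℝ) else 0) := by
    rw [Finset.mul_sum]
    refine Finset.sum_congr rfl fun x _ => ?_
    rw [Finset.mul_sum]
    refine Finset.sum_congr rfl fun y _ => ?_
    by_cases h : G.Adj x y <;> simp [Qmat, h]
  rw [e1, e2]
  have : Qmat G none none = (indepNum G : ℝ) := rfl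
  rw [this]
  ring

/-- The main extremality computation: if a symmetric matrix `Z` vanishes on all equality
vectors of `Q_G`, `G` connected and `α`-critical, then `Z` is a multiple of `Q_G`. -/

lemma extreme_aux (hV : Nonempty V) (hconn : G.Connected)
    (hcrit : ∀ x y : V, G.Adj x y → indepNum G < indepNum (G.deleteEdges {s(x, y)}))
    (Z : Matrix (Option V) (Option V) ℝ) (hsymm : Z.IsSymm)
    (h0 : ∀ f : Option V → ℝ, (∀ w, f w = 0 ∨ f w = 1) →
      (∑ x : Option V, ∑ y : Option V, Qmat G x y * (f x * f y)) = 0 →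
      (∑ x : Option V, ∑ y : Option V, Z x y * (f x * f y)) = 0) :
    ∃ c : ℝ, Z = c • Qmat G := by
  classical
  set α := indepNum G with hα
  -- the master relation
  have hrel : ∀ (t : ℝ) (s : Finset V), (t = 0 ∨ t = 1) →
      ((α : ℝ) * (t * t) - t * s.card
        + (1/2) * ∑ x ∈ s, ∑ y ∈ s, (if G.Adj x y then (1:ℝ) else 0)) = 0 →
      Z none none * (t * t) + t * (∑ x ∈ s, (Z none (some x) + Z (some x) none))
        + ∑ x ∈ s, ∑ y ∈ s, Z (some x) (some y) = 0 := by
    intro t s ht hq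
    have := h0 (fset t s) (fset_boolean ht s) (by rw [Q_fset]; exact hq)
    rwa [B_fset] at this
  -- Step 1 : diagonal entries vanish
  have hdiag : ∀ v : V, Z (some v) (some v) = 0 := by
    intro v
    have hq : ((α : ℝ) * (0 * 0) - 0 * ({v} : Finset V).card
        + (1/2) * ∑ x ∈ ({v} : Finset V), ∑ y ∈ ({v} : Finset V),
          (if G.Adj x y then (1:ℝ) else 0)) = 0 := by
      rw [Finset.sum_singleton, Finset.sum_singleton]
      simp [G.irrefl]
    have := hrel 0 {v} (Or.inl rfl) hq
    rw [Finset.sum_singleton, Finset.sum_singleton] at this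
    simpa using this
  -- Step 2 : non-edge entries vanish
  have hoff : ∀ u v : V, u ≠ v → ¬ G.Adj u v → Z (some u) (some v) = 0 := by
    intro u v hne hnadj
    have hzuv : Z (some v) (some u) = Z (some u) (some v) := hsymm.apply _ _
    have hq : ((α : ℝ) * (0 * 0) - 0 * ({u, v} : Finset V).card
        + (1/2) * ∑ x ∈ ({u, v} : Finset V), ∑ y ∈ ({u, v} : Finset V),
          (if G.Adj x y then (1:ℝ) else 0)) = 0 := by
      have hnadj' : ¬ G.Adj v u := fun h => hnadj h.symm
      simp [Finset.sum_pair hne, G.irrefl, hnadj, hnadj']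
    have := hrel 0 {u, v} (Or.inl rfl) hq
    simp [Finset.sum_pair hne, hdiag u, hdiag v, hzuv] at this
    linarith
  -- Step 3 : relation for maximum independent sets
  have hindep : ∀ s : Finset V, (∀ x ∈ s, ∀ y ∈ s, ¬ G.Adj x y) → s.card = α →
      Z none none + 2 * ∑ x ∈ s, Z none (some x) = 0 := by
    intro s hs hcard
    have hq : ((α : ℝ) * (1 * 1) - 1 * s.card
        + (1/2) * ∑ x ∈ s, ∑ y ∈ s, (if G.Adj x y then (1:ℝ) else 0)) = 0 := by
      have : ∑ x ∈ s, ∑ y ∈ s, (if G.Adj x y then (1:ℝ) else 0) = 0 :=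
        Finset.sum_eq_zero fun x hx => Finset.sum_eq_zero fun y hy => by
          simp [hs x hx y hy]
      rw [this, hcard]
      ring
    have := hrel 1 s (Or.inr rfl) hq
    have hz : ∑ x ∈ s, ∑ y ∈ s, Z (some x) (some y) = 0 := by
      refine Finset.sum_eq_zero fun x hx => Finset.sum_eq_zero fun y hy => ?_
      by_cases hxy : x = y
      · subst hxy; exact hdiag x
      · exact hoff x y hxy (hs x hx y hy)
    have hsum : ∑ x ∈ s, (Z none (some x) + Z (some x) none)
        = 2 * ∑ x ∈ s, Z none (some x) := by
      rw [Finset.sum_add_distrib,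
        Finset.sum_congr rfl (fun x (_ : x ∈ s) => hsymm.apply none (some x))]
      ring
    rw [hz, hsum] at this
    linarith
  -- Step 4 : for every edge, `Z none u = Z none v = - Z u v`
  have hedge : ∀ u v : V, G.Adj u v →
      Z none (some u) = - Z (some u) (some v) ∧
      Z none (some v) = - Z (some u) (some v) := by
    intro u v hadj
    have hne : u ≠ v := G.ne_of_adj hadj
    -- a big independent set in the graph with the edge `uv` deleted
    set G' := G.deleteEdges {s(u, v)} with hG'
    haveI : DecidableRel G'.Adj := Classical.decRel _
    obtain ⟨s₀, -, hs₀ind, hs₀card⟩ := relIndep_spec (G := G') Finset.univ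
    have hcard' : α + 1 ≤ s₀.card := by
      rw [hs₀card, ← indepNum_eq_relIndep]
      exact hcrit u v hadj
    obtain ⟨T, hTs, hTcard⟩ := s₀.exists_subset_card_eq hcard'
    have hTind : ∀ x ∈ T, ∀ y ∈ T, ¬ G'.Adj x y :=
      fun x hx y hy => hs₀ind x (hTs hx) y (hTs hy)
    -- `T` contains both `u` and `v`
    have huvT : u ∈ T ∧ v ∈ T := by
      by_contra hcon
      have hGind : ∀ x ∈ T, ∀ y ∈ T, ¬ G.Adj x y := by
        intro x hx y hy hxy
        refine hTind x hx y hy ?_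
        rw [hG', SimpleGraph.deleteEdges_adj]
        refine ⟨hxy, ?_⟩
        intro hmem
        have : s(x, y) = s(u, v) := by simpa using hmem
        rcases Sym2.eq_iff.mp this with ⟨rfl, rfl⟩ | ⟨rfl, rfl⟩
        · exact hcon ⟨hx, hy⟩
        · exact hcon ⟨hy, hx⟩
      have := le_indepNum hGind
      rw [hTcard] at this
      omega
    obtain ⟨huT, hvT⟩ := huvT
    -- characterise adjacency inside `T`
    have hadjT : ∀ x ∈ T, ∀ y ∈ T, (G.Adj x y ↔ (x = u ∧ y = v) ∨ (x = v ∧ y = u)) := by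
      intro x hx y hy
      constructor
      · intro hxy
        by_contra hcon
        refine hTind x hx y hy ?_
        rw [hG', SimpleGraph.deleteEdges_adj]
        refine ⟨hxy, fun hmem => hcon ?_⟩
        have : s(x, y) = s(u, v) := by simpa using hmem
        exact Sym2.eq_iff.mp this
      · rintro (⟨rfl, rfl⟩ | ⟨rfl, rfl⟩)
        · exact hadj
        · exact hadj.symm
    -- the double adjacency count inside `T` is `2`
    have hd2 : ∑ x ∈ T, ∑ y ∈ T, (if G.Adj x y then (1:ℝ) else 0) = 2 := by
      have hpt : ∀ x ∈ T, ∀ y ∈ T, (if G.Adj x y then (1:ℝ) else 0)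
          = (if x = u then (1:ℝ) else 0) * (if y = v then (1:ℝ) else 0)
            + (if x = v then (1:ℝ) else 0) * (if y = u then (1:ℝ) else 0) := by
        intro x hx y hy
        by_cases hc1 : x = u ∧ y = v
        · obtain ⟨rfl, rfl⟩ := hc1
          simp [hadj, hne, hne.symm]
        · by_cases hc2 : x = v ∧ y = u
          · obtain ⟨rfl, rfl⟩ := hc2
            simp [hadj.symm, hne, hne.symm]
          · have hna : ¬ G.Adj x y := by rw [hadjT x hx y hy]; tauto
            have e1 : (if x = u then (1:ℝ) else 0) * (if y = v then 1 else 0) = 0 := by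
              rcases not_and_or.mp hc1 with h | h <;> simp [h]
            have e2 : (if x = v then (1:ℝ) else 0) * (if y = u then 1 else 0) = 0 := by
              rcases not_and_or.mp hc2 with h | h <;> simp [h]
            rw [if_neg hna, e1, e2]
            ring
      rw [Finset.sum_congr rfl (fun x hx => Finset.sum_congr rfl (fun y hy => hpt x hx y hy))]
      have : ∀ x ∈ T, ∑ y ∈ T, ((if x = u then (1:ℝ) else 0) * (if y = v then (1:ℝ) else 0)
            + (if x = v then (1:ℝ) else 0) * (if y = u then (1:ℝ) else 0))
          = (if x = u then (1:ℝ) else 0) + (if x = v then (1:ℝ) else 0) := by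
        intro x hx
        rw [Finset.sum_add_distrib, ← Finset.mul_sum, ← Finset.mul_sum]
        rw [Finset.sum_ite_eq' T v (fun _ => (1:ℝ)), Finset.sum_ite_eq' T u (fun _ => (1:ℝ))]
        simp [huT, hvT]
      rw [Finset.sum_congr rfl this, Finset.sum_add_distrib]
      rw [Finset.sum_ite_eq' T u (fun _ => (1:ℝ)), Finset.sum_ite_eq' T v (fun _ => (1:ℝ))]
      simp [huT, hvT]
      norm_num
    -- the `Z` double sum inside `T` is `2 Z u v`
    have hz2 : ∑ x ∈ T, ∑ y ∈ T, Z (some x) (some y) = 2 * Z (some u) (some v) := by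
      have hzvu : Z (some v) (some u) = Z (some u) (some v) := hsymm.apply _ _
      have hZ0 : ∀ x ∈ T, ∀ y ∈ T, ¬((x = u ∧ y = v) ∨ (x = v ∧ y = u)) →
          Z (some x) (some y) = 0 := by
        intro x hx y hy hno
        by_cases hxy : x = y
        · subst hxy; exact hdiag x
        · exact hoff x y hxy (by rw [hadjT x hx y hy]; exact hno)
      have hpt : ∀ x ∈ T, ∀ y ∈ T, Z (some x) (some y)
          = ((if x = u then (1:ℝ) else 0) * (if y = v then (1:ℝ) else 0)
            + (if x = v then (1:ℝ) else 0) * (if y = u then (1:ℝ) else 0))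
              * Z (some u) (some v) := by
        intro x hx y hy
        by_cases hc1 : x = u ∧ y = v
        · obtain ⟨rfl, rfl⟩ := hc1
          simp [hne, hne.symm]
        · by_cases hc2 : x = v ∧ y = u
          · obtain ⟨rfl, rfl⟩ := hc2
            simp [hne, hne.symm, hzvu]
          · have e1 : (if x = u then (1:ℝ) else 0) * (if y = v then 1 else 0) = 0 := by
              rcases not_and_or.mp hc1 with h | h <;> simp [h]
            have e2 : (if x = v then (1:ℝ) else 0) * (if y = u then 1 else 0) = 0 := by
              rcases not_and_or.mp hc2 with h | h <;> simp [h]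
            rw [hZ0 x hx y hy (by tauto), e1, e2]
            ring
      rw [Finset.sum_congr rfl (fun x hx => Finset.sum_congr rfl (fun y hy => hpt x hx y hy))]
      have hrow : ∀ x ∈ T, ∑ y ∈ T, ((if x = u then (1:ℝ) else 0) * (if y = v then (1:ℝ) else 0)
            + (if x = v then (1:ℝ) else 0) * (if y = u then (1:ℝ) else 0)) * Z (some u) (some v)
          = ((if x = u then (1:ℝ) else 0) + (if x = v then (1:ℝ) else 0)) * Z (some u) (some v) := by
        intro x hx
        rw [← Finset.sum_mul]
        congr 1
        rw [Finset.sum_add_distrib, ← Finset.mul_sum, ← Finset.mul_sum]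
        rw [Finset.sum_ite_eq' T v (fun _ => (1:ℝ)), Finset.sum_ite_eq' T u (fun _ => (1:ℝ))]
        simp [huT, hvT]
      rw [Finset.sum_congr rfl hrow, ← Finset.sum_mul, Finset.sum_add_distrib]
      rw [Finset.sum_ite_eq' T u (fun _ => (1:ℝ)), Finset.sum_ite_eq' T v (fun _ => (1:ℝ))]
      rw [if_pos huT, if_pos hvT]
      ring
    -- relation R4 from the set `T`
    have hq4 : ((α : ℝ) * (1 * 1) - 1 * T.card
        + (1/2) * ∑ x ∈ T, ∑ y ∈ T, (if G.Adj x y then (1:ℝ) else 0)) = 0 := by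
      rw [hd2, hTcard]
      push_cast
      ring
    have hR4 := hrel 1 T (Or.inr rfl) hq4
    rw [hz2] at hR4
    have hsumT : ∑ x ∈ T, (Z none (some x) + Z (some x) none)
        = 2 * ∑ x ∈ T, Z none (some x) := by
      rw [Finset.sum_add_distrib,
        Finset.sum_congr rfl (fun x (_ : x ∈ T) => hsymm.apply none (some x))]
      ring
    rw [hsumT] at hR4
    -- relations R5 : erase `u` (resp. `v`) from `T`
    have herase : ∀ w ∈ T, (w = u ∨ w = v) →
        Z none none + 2 * ∑ x ∈ T.erase w, Z none (some x) = 0 := by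
      intro w hw hworv
      refine hindep (T.erase w) ?_ ?_
      · intro x hx y hy hxy
        rcases (hadjT x (Finset.mem_of_mem_erase hx) y (Finset.mem_of_mem_erase hy)).mp hxy
          with ⟨rfl, rfl⟩ | ⟨rfl, rfl⟩ <;>
        rcases hworv with rfl | rfl
        · exact (Finset.mem_erase.mp hx).1 rfl
        · exact (Finset.mem_erase.mp hy).1 rfl
        · exact (Finset.mem_erase.mp hy).1 rfl
        · exact (Finset.mem_erase.mp hx).1 rfl
      · rw [Finset.card_erase_of_mem hw, hTcard]
        omega
    have hu1 : Z none (some u) = - Z (some u) (some v) := by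
      have h5 := herase u huT (Or.inl rfl)
      have hsplit : ∑ x ∈ T, Z none (some x)
          = Z none (some u) + ∑ x ∈ T.erase u, Z none (some x) :=
        (Finset.add_sum_erase T (fun x => Z none (some x)) huT).symm
      rw [hsplit] at hR4
      linarith
    have hv1 : Z none (some v) = - Z (some u) (some v) := by
      have h5 := herase v hvT (Or.inr rfl)
      have hsplit : ∑ x ∈ T, Z none (some x)
          = Z none (some v) + ∑ x ∈ T.erase v, Z none (some x) :=
        (Finset.add_sum_erase T (fun x => Z none (some x)) hvT).symm
      rw [hsplit] at hR4
      linarith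
    exact ⟨hu1, hv1⟩
  -- Step 5 : `Z none ·` is constant on `V` by connectivity
  have hconst : ∀ a b : V, Z none (some a) = Z none (some b) := by
    have hstep : ∀ a b : V, G.Adj a b → Z none (some a) = Z none (some b) := by
      intro a b hab
      obtain ⟨h1, h2⟩ := hedge a b hab
      rw [h1, h2]
    intro a b
    obtain ⟨w⟩ := hconn.preconnected a b
    induction w with
    | nil => rfl
    | cons h p ih => exact (hstep _ _ h).trans ih
  -- Step 6 : conclude
  obtain ⟨v₀⟩ := hV
  set lam := Z none (some v₀) with hlam
  refine ⟨-2 * lam, ?_⟩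
  have hlamv : ∀ v : V, Z none (some v) = lam := fun v => hconst v v₀
  -- the `∅∅` entry
  obtain ⟨A, -, hAind, hAcard⟩ := relIndep_spec (G := G) Finset.univ
  have hAcard' : A.card = α := by rw [hAcard, ← indepNum_eq_relIndep]
  have hZnn : Z none none = -2 * lam * α := by
    have := hindep A hAind hAcard'
    have hsum : ∑ x ∈ A, Z none (some x) = α * lam := by
      rw [Finset.sum_congr rfl (fun x (_ : x ∈ A) => hlamv x), Finset.sum_const,
        nsmul_eq_mul, hAcard']
    rw [hsum] at this
    linarith
  funext a b
  rw [Matrix.smul_apply, smul_eq_mul]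
  cases a with
  | none => cases b with
    | none => exact hZnn
    | some v =>
        have : Qmat G none (some v) = -(1/2) := rfl
        rw [this, hlamv v]
        ring
  | some x => cases b with
    | none =>
        have : Qmat G (some x) none = -(1/2) := rfl
        rw [this, hsymm.apply none (some x), hlamv x]
        ring
    | some y =>
        have hQ : Qmat G (some x) (some y) = if G.Adj x y then 1/2 else 0 := rfl
        rw [hQ]
        by_cases hxy : G.Adj x y
        · rw [if_pos hxy]
          have h1 := (hedge x y hxy).1
          have h2 := hlamv x
          have h3 : Z (some x) (some y) = - lam := by linarith
          rw [h3]; ring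
        · rw [if_neg hxy]
          by_cases hx : x = y
          · subst hx; simp [hdiag]
          · simp [hoff x y hx hxy]

end Rel

/-- `⟨Q_G, A⟩ ≥ 0` induces a facet of the Boolean-quadratic cone on
`W = V ∪ {∅}` if and only if `G` is connected and `α`-critical. -/
theorem stmt_7 {V : Type*} [Fintype V] [DecidableEq V] (G : SimpleGraph V)
    [DecidableRel G.Adj] (hcard : 2 ≤ Fintype.card V) :
    InducesFacet (Qmat G) ↔
      (G.Connected ∧ ∀ x y : V, G.Adj x y →
        indepNum G < indepNum (G.deleteEdges {s(x, y)})) := by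
  classical
  have hV : Nonempty V := Fintype.card_pos_iff.mp (by omega)
  have hα1 : 1 ≤ indepNum G := by
    obtain ⟨v⟩ := hV
    have := le_indepNum (G := G) (s := {v}) (by simp [G.irrefl])
    simpa using this
  have hαpos : (0:ℝ) < (indepNum G : ℝ) := by exact_mod_cast hα1
  constructor
  · rintro ⟨hdual, hne0, hext⟩
    constructor
    · -- connectedness
      by_contra hnc
      obtain ⟨u₀, w₀, hnr⟩ : ∃ u w : V, ¬ G.Reachable u w := by
        by_contra h
        push_neg at h
        exact hnc ((G.connected_iff).mpr ⟨fun a b => h a b, hV⟩)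
      set A : Finset V := univ.filter (fun v => G.Reachable u₀ v) with hA
      have hu₀A : u₀ ∈ A := by simp only [hA, Finset.mem_filter, Finset.mem_univ, true_and]; exact SimpleGraph.Reachable.refl u₀
      have hw₀A : w₀ ∉ A := by simp [hA]; exact hnr
      have hcross : ∀ x ∈ A, ∀ y, y ∉ A → ¬ G.Adj x y := by
        intro x hx y hy hxy
        refine hy ?_
        simp only [hA, Finset.mem_filter, Finset.mem_univ, true_and] at hx ⊢
        exact hx.trans hxy.reachable
      have hcross' : ∀ x ∈ Aᶜ, ∀ y, y ∉ Aᶜ → ¬ G.Adj x y := by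
        intro x hx y hy hxy
        exact hcross y (by simpa using hy) x (Finset.mem_compl.mp hx) hxy.symm
      have hadd : QmatA G A + QmatA G Aᶜ = Qmat G := by
        rw [Qmat_eq_QmatA]
        funext a b
        rw [Matrix.add_apply]
        cases a with
        | none => cases b with
          | none =>
              show ((relIndep G A : ℝ) + relIndep G Aᶜ) = relIndep G univ
              rw [relIndep_add hcross]
              push_cast
              ring
          | some x =>
              show (if x ∈ A then -(1/2:ℝ) else 0) + (if x ∈ Aᶜ then -(1/2:ℝ) else 0)
                = if x ∈ (univ : Finset V) then -(1/2:ℝ) else 0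
              by_cases hx : x ∈ A <;> simp [hx]
        | some x => cases b with
          | none =>
              show (if x ∈ A then -(1/2:ℝ) else 0) + (if x ∈ Aᶜ then -(1/2:ℝ) else 0)
                = if x ∈ (univ : Finset V) then -(1/2:ℝ) else 0
              by_cases hx : x ∈ A <;> simp [hx]
          | some y =>
              show (if G.Adj x y ∧ x ∈ A ∧ y ∈ A then (1/2:ℝ) else 0)
                  + (if G.Adj x y ∧ x ∈ Aᶜ ∧ y ∈ Aᶜ then (1/2:ℝ) else 0)
                = if G.Adj x y ∧ x ∈ (univ : Finset V) ∧ y ∈ (univ : Finset V)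
                    then (1/2:ℝ) else 0
              by_cases hxy : G.Adj x y
              · by_cases hx : x ∈ A
                · have hy : y ∈ A := by
                    by_contra hy
                    exact hcross x hx y hy hxy
                  simp [hxy, hx, hy]
                · have hy : y ∉ A := by
                    intro hy
                    exact hcross y hy x hx hxy.symm
                  simp [hxy, hx, hy]
              · simp [hxy]
      obtain ⟨c, -, hc⟩ := hext (QmatA G A) (QmatA G Aᶜ) (QmatA_dual A) (QmatA_dual Aᶜ) hadd
      have h1 : QmatA G A none (some w₀) = 0 := by
        show (if w₀ ∈ A then -(1/2:ℝ) else 0) = 0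
        simp [hw₀A]
      have h2 := congrFun (congrFun hc none) (some w₀)
      rw [h1, Matrix.smul_apply, smul_eq_mul] at h2
      have hQw : Qmat G none (some w₀) = -(1/2) := rfl
      rw [hQw] at h2
      have hc0 : c = 0 := by linarith
      have h3 := congrFun (congrFun hc none) none
      rw [Matrix.smul_apply, smul_eq_mul, hc0] at h3
      have h4 : QmatA G A none none = (relIndep G A : ℝ) := rfl
      rw [h4] at h3
      have h5 : 1 ≤ relIndep G A :=
        le_relIndep (s := {u₀}) (by simpa using hu₀A) (by simp [G.irrefl]) |>.trans_eq' (by simp)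
      have : (1:ℝ) ≤ (relIndep G A : ℝ) := by exact_mod_cast h5
      rw [h3] at this
      linarith
    · -- α-criticality
      intro u v huv
      by_contra hle
      push_neg at hle
      set G' := G.deleteEdges {s(u, v)} with hG'
      haveI : DecidableRel G'.Adj := Classical.decRel _
      have hmono : indepNum G ≤ indepNum G' := by
        rw [indepNum_eq_relIndep (G := G), indepNum_eq_relIndep (G := G')]
        obtain ⟨s, hsub, hsind, hscard⟩ := relIndep_spec (G := G) Finset.univ
        rw [← hscard]
        refine le_relIndep hsub (fun x hx y hy hxy => hsind x hx y hy ?_)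
        rw [hG', SimpleGraph.deleteEdges_adj] at hxy
        exact hxy.1
      have heq : indepNum G' = indepNum G := le_antisymm hle hmono
      set E2 : Matrix (Option V) (Option V) ℝ := fun a b =>
        match a, b with
        | some x, some y => if (x = u ∧ y = v) ∨ (x = v ∧ y = u) then (1:ℝ)/2 else 0
        | _, _ => 0 with hE2
      have hE2dual : InBqcDual E2 := by
        constructor
        · unfold Matrix.IsSymm
          funext a b
          rw [Matrix.transpose_apply]
          cases a <;> cases b <;> simp only [hE2]
          exact if_congr (by tauto) rfl rfl
        · intro f hf
          refine Finset.sum_nonneg fun x _ => Finset.sum_nonneg fun y _ => ?_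
          have hf0 : ∀ w, 0 ≤ f w := fun w => by rcases hf w with h | h <;> simp [h]
          have hE0 : ∀ a b : Option V, 0 ≤ E2 a b := by
            intro a b
            cases a <;> cases b
            · exact le_refl 0
            · exact le_refl 0
            · exact le_refl 0
            · show (0:ℝ) ≤ if _ then (1:ℝ)/2 else 0
              split <;> norm_num
          exact mul_nonneg (hE0 x y) (mul_nonneg (hf0 x) (hf0 y))
      have hQ'dual : InBqcDual (Qmat G') := by
        rw [Qmat_eq_QmatA]
        exact QmatA_dual Finset.univ
      have hadd : Qmat G' + E2 = Qmat G := by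
        funext a b
        rw [Matrix.add_apply]
        cases a with
        | none => cases b with
          | none =>
              show (indepNum G' : ℝ) + 0 = (indepNum G : ℝ)
              rw [heq]; ring
          | some x => show -(1/2:ℝ) + 0 = -(1/2:ℝ); ring
        | some x => cases b with
          | none => show -(1/2:ℝ) + 0 = -(1/2:ℝ); ring
          | some y =>
              show (if G'.Adj x y then (1/2:ℝ) else 0)
                  + (if (x = u ∧ y = v) ∨ (x = v ∧ y = u) then (1:ℝ)/2 else 0)
                = if G.Adj x y then (1/2:ℝ) else 0
              by_cases hpair : (x = u ∧ y = v) ∨ (x = v ∧ y = u)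
              · have hadj : G.Adj x y := by
                  rcases hpair with ⟨rfl, rfl⟩ | ⟨rfl, rfl⟩
                  · exact huv
                  · exact huv.symm
                have hnadj' : ¬ G'.Adj x y := by
                  rw [hG', SimpleGraph.deleteEdges_adj]
                  rintro ⟨-, hmem⟩
                  exact hmem (by simpa using Sym2.eq_iff.mpr hpair)
                simp [hpair, hadj, hnadj']
              · by_cases hadj : G.Adj x y
                · have hadj' : G'.Adj x y := by
                    rw [hG', SimpleGraph.deleteEdges_adj]
                    refine ⟨hadj, fun hmem => hpair ?_⟩
                    exact Sym2.eq_iff.mp (by simpa using hmem)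
                  simp [hpair, hadj, hadj']
                · have hnadj' : ¬ G'.Adj x y := fun h => hadj
                    (by rw [hG', SimpleGraph.deleteEdges_adj] at h; exact h.1)
                  simp [hpair, hadj, hnadj']
      obtain ⟨c, -, hc⟩ := hext (Qmat G') E2 hQ'dual hE2dual hadd
      have h1 := congrFun (congrFun hc none) none
      have e1 : Qmat G' none none = (indepNum G' : ℝ) := rfl
      have e2 : Qmat G none none = (indepNum G : ℝ) := rfl
      rw [Matrix.smul_apply, smul_eq_mul, e1, e2, heq] at h1
      have hc1 : c = 1 := by
        have hne : (indepNum G : ℝ) ≠ 0 := ne_of_gt hαpos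
        exact mul_right_cancel₀ hne
          (by linarith : c * (indepNum G : ℝ) = 1 * (indepNum G : ℝ))
      have h2 := congrFun (congrFun hc (some u)) (some v)
      have hnadj' : ¬ G'.Adj u v := by
        rw [hG', SimpleGraph.deleteEdges_adj]
        rintro ⟨-, hmem⟩
        exact hmem rfl
      have e3 : Qmat G' (some u) (some v) = 0 := by
        show (if G'.Adj u v then (1/2:ℝ) else 0) = 0
        simp [hnadj']
      have e4 : Qmat G (some u) (some v) = 1/2 := by
        show (if G.Adj u v then (1/2:ℝ) else 0) = 1/2
        simp [huv]
      rw [Matrix.smul_apply, smul_eq_mul, e3, e4, hc1] at h2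
      norm_num at h2
  · rintro ⟨hconn, hcrit⟩
    refine ⟨by rw [Qmat_eq_QmatA]; exact QmatA_dual Finset.univ, ?_, ?_⟩
    · intro h
      have := congrFun (congrFun h none) none
      have e1 : Qmat G none none = (indepNum G : ℝ) := rfl
      rw [e1, Matrix.zero_apply] at this
      linarith
    · intro Z₁ Z₂ h1 h2 hadd
      have h0 : ∀ f : Option V → ℝ, (∀ w, f w = 0 ∨ f w = 1) →
          (∑ x : Option V, ∑ y : Option V, Qmat G x y * (f x * f y)) = 0 →
          (∑ x : Option V, ∑ y : Option V, Z₁ x y * (f x * f y)) = 0 := by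
        intro f hf hQf
        have e1 := h1.2 f hf
        have e2 := h2.2 f hf
        have esum : (∑ x : Option V, ∑ y : Option V, Z₁ x y * (f x * f y))
            + (∑ x : Option V, ∑ y : Option V, Z₂ x y * (f x * f y))
            = ∑ x : Option V, ∑ y : Option V, Qmat G x y * (f x * f y) := by
          rw [← hadd]
          rw [← Finset.sum_add_distrib]
          refine Finset.sum_congr rfl fun x _ => ?_
          rw [← Finset.sum_add_distrib]
          refine Finset.sum_congr rfl fun y _ => ?_
          rw [Matrix.add_apply]
          ring
        linarith
      obtain ⟨c, hc⟩ := extreme_aux hV hconn hcrit Z₁ h1.1 h0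
      refine ⟨c, ?_, hc⟩
      have hpos := h1.2 (fset 1 ∅) (fset_boolean (Or.inr rfl) ∅)
      rw [B_fset] at hpos
      simp only [Finset.sum_empty] at hpos
      have hZ1nn : 0 ≤ Z₁ none none := by linarith
      have hcc := congrFun (congrFun hc none) none
      have e1 : Qmat G none none = (indepNum G : ℝ) := rfl
      rw [Matrix.smul_apply, smul_eq_mul, e1] at hcc
      by_contra hc0
      push_neg at hc0
      have : c * (indepNum G : ℝ) < 0 := mul_neg_of_neg_of_pos hc0 hαpos
      rw [← hcc] at this
      linarith
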